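/- Let n ≥ 1 and let f be a solution of the n×n Pulsar puzzle. If two cells lie in the same row, or in the same column, and one of them belongs to C_n while the other does not, then the value of f at the cell in C_n is strictly greater than the value of f at the cell not in C_n. -/

import Mathlib

/-! In a solution every value `v` occurs exactly `v` times among the circled cells: a value that
occurs at all occurs as often as it says, and there are exactly `1 + ⋯ + n` circled cells, because
the row counts of `C_n` are a permutation of `1, …, n` (by induction: rows of `C_n` are reflected
columns of `C_{n-1}` and vice versa). Hence the circled cells with value at least `n + 1 - m`
number `(n + 1 - m) + ⋯ + n = ∑ₖ min k m`, while a row with `k` circled cells contains at most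
`min k m` of them. So every row attains this bound: the `k` circled entries of a row are its `k`
largest values. Columns are the rows of the transposed square and transposed circled set. -/

/-- The circled set `C n` of the `n × n` Pulsar puzzle, as a predicate on cells `(r, c)`
(1-indexed).  `C 1 = {(1,1)}`, and for `n ≥ 2`, a cell `(r,c)` of the grid is circled iff
`r = 1`, or `r ≥ 2`, `c ≥ 2` and `(n - c + 1, r - 1)` is circled in `C (n-1)`. -/
def Circled : ℕ → ℕ × ℕ → Prop
  | 0, _ => False
  | 1, p => p = (1, 1)
  | (n + 2), (r, c) =>
      1 ≤ r ∧ r ≤ n + 2 ∧ 1 ≤ c ∧ c ≤ n + 2 ∧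
        (r = 1 ∨ (2 ≤ r ∧ 2 ≤ c ∧ Circled (n + 1) (n + 2 - c + 1, r - 1)))

/-- `f` is a Latin square of order `n`: on the grid of cells `(r, c)` with `1 ≤ r, c ≤ n`
it takes values in `{1, …, n}`, with distinct values on distinct cells of any one row
and on distinct cells of any one column. -/
def IsLatinSquare (n : ℕ) (f : ℕ × ℕ → ℕ) : Prop :=
  (∀ r c, 1 ≤ r → r ≤ n → 1 ≤ c → c ≤ n → 1 ≤ f (r, c) ∧ f (r, c) ≤ n) ∧
  (∀ r c₁ c₂, 1 ≤ r → r ≤ n → 1 ≤ c₁ → c₁ ≤ n → 1 ≤ c₂ → c₂ ≤ n → c₁ ≠ c₂ →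
    f (r, c₁) ≠ f (r, c₂)) ∧
  (∀ r₁ r₂ c, 1 ≤ r₁ → r₁ ≤ n → 1 ≤ r₂ → r₂ ≤ n → 1 ≤ c → c ≤ n → r₁ ≠ r₂ →
    f (r₁, c) ≠ f (r₂, c))

/-- `f` is a solution of the `n × n` Pulsar puzzle: a Latin square of order `n` such that
each circled entry equals the number of circled cells carrying that same value. -/
def IsPulsarSolution (n : ℕ) (f : ℕ × ℕ → ℕ) : Prop :=
  IsLatinSquare n f ∧
    ∀ p, Circled n p → f p = Set.ncard {q : ℕ × ℕ | Circled n q ∧ f q = f p}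

open Finset

section Counting

variable {M : Type*} [AddCommMonoid M]

theorem Finset.card_filter_product_eq_sum {α β : Type*} (s : Finset α) (t : Finset β)
    (p : α × β → Prop) [DecidablePred p] :
    #{x ∈ s ×ˢ t | p x} = ∑ a ∈ s, #{b ∈ t | p (a, b)} := by
  simp only [card_filter, sum_product]

theorem Finset.card_fiber_eq_of_self_counting {α : Type*} {s : Finset α} {t : Finset ℕ}
    {f : α → ℕ} (hf : ∀ a ∈ s, f a ∈ t) (hfiber : ∀ a ∈ s, #{b ∈ s | f b = f a} = f a)
    (hcard : #s = ∑ v ∈ t, v) : ∀ v ∈ t, #{a ∈ s | f a = v} = v := by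
  have hle : ∀ v ∈ t, #{a ∈ s | f a = v} ≤ v := by
    intro v _
    obtain h | ⟨a, ha⟩ := (s.filter (f · = v)).eq_empty_or_nonempty
    · simp [h]
    · obtain ⟨has, rfl⟩ := mem_filter.1 ha
      exact (hfiber a has).le
  exact (sum_eq_sum_iff_of_le hle).1 (by rw [← card_eq_sum_card_fiberwise hf, hcard])

theorem Finset.card_filter_le_sub_of_injOn {α : Type*} {s : Finset α} {g : α → ℕ} {n : ℕ}
    (hg : ∀ a ∈ s, g a ≤ n) (hinj : Set.InjOn g s) (w : ℕ) :
    #{a ∈ s | w ≤ g a} ≤ n + 1 - w :=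
  calc #{a ∈ s | w ≤ g a}
      ≤ #(Icc w n) := card_le_card_of_injOn g
        (fun a ha => by
          obtain ⟨ha, hw⟩ := mem_filter.1 ha
          exact mem_Icc.2 ⟨hw, hg a ha⟩)
        (hinj.mono (filter_subset _ _))
    _ = n + 1 - w := Nat.card_Icc w n

theorem Nat.sum_Icc_min_eq_sum_Icc (n : ℕ) :
    ∀ m ≤ n, ∑ k ∈ Icc 1 n, min k m = ∑ v ∈ Icc (n + 1 - m) n, v
  | 0, _ => by simp
  | m + 1, hm => by
    have hmin : ∀ k ∈ Icc 1 n, min k (m + 1) = min k m + if m + 1 ≤ k then 1 else 0 := by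
      intro k _
      split <;> omega
    have hcount : ∑ k ∈ Icc 1 n, (if m + 1 ≤ k then 1 else 0) = n - m := by
      rw [← card_filter, show {k ∈ Icc 1 n | m + 1 ≤ k} = Icc (m + 1) n by ext; simp; omega,
        Nat.card_Icc]
      omega
    have hIcc : Icc (n + 1 - (m + 1)) n = insert (n - m) (Icc (n + 1 - m) n) := by
      ext; simp only [mem_Icc, mem_insert]; omega
    rw [sum_congr rfl hmin, sum_add_distrib, Nat.sum_Icc_min_eq_sum_Icc n m (by omega), hcount,
      hIcc, sum_insert (by simp; omega), add_comm]

theorem Finset.sum_Icc_one_add_one (n : ℕ) (f : ℕ → M) :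
    ∑ x ∈ Icc 1 (n + 1), f x = f 1 + ∑ x ∈ Icc 1 n, f (x + 1) := by
  rw [← insert_Icc_add_one_left_eq_Icc (by omega : 1 ≤ n + 1), sum_insert (by simp),
    ← map_add_right_Icc 1 n 1, sum_map]
  rfl

theorem Finset.sum_Icc_one_reflect (n : ℕ) (f : ℕ → M) :
    ∑ x ∈ Icc 1 n, f (n + 1 - x) = ∑ x ∈ Icc 1 n, f x :=
  sum_nbij' (fun x => n + 1 - x) (fun x => n + 1 - x)
    (fun x hx => by simp only [mem_Icc] at hx ⊢; omega)
    (fun x hx => by simp only [mem_Icc] at hx ⊢; omega)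
    (fun x hx => by simp only [mem_Icc] at hx; omega)
    (fun x hx => by simp only [mem_Icc] at hx; omega)
    (fun x _ => rfl)

theorem Finset.card_filter_Icc_one_add_one (n : ℕ) (p : ℕ → Prop) [DecidablePred p] :
    #{x ∈ Icc 1 (n + 1) | p x} = (if p 1 then 1 else 0) + #{x ∈ Icc 1 n | p (x + 1)} := by
  rw [card_filter, card_filter, sum_Icc_one_add_one]

theorem Finset.card_filter_Icc_one_reflect (n : ℕ) (p : ℕ → Prop) [DecidablePred p] :
    #{x ∈ Icc 1 n | p (n + 1 - x)} = #{x ∈ Icc 1 n | p x} := by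
  rw [card_filter, card_filter, sum_Icc_one_reflect n fun x => if p x then 1 else 0]

theorem Set.ncard_preimage_swap {α β : Type*} (s : Set (α × β)) :
    (Prod.swap ⁻¹' s).ncard = s.ncard :=
  Set.ncard_preimage_of_injective_subset_range Prod.swap_injective
    (by rw [Prod.swap_surjective.range_eq]; exact Set.subset_univ s)

end Counting

section LatinSquare

variable {n : ℕ} {f : ℕ × ℕ → ℕ}

theorem IsLatinSquare.apply_mem_Icc (hf : IsLatinSquare n f) {r c : ℕ} (hr : r ∈ Icc 1 n)
    (hc : c ∈ Icc 1 n) : f (r, c) ∈ Icc 1 n := by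
  rw [mem_Icc] at *
  exact hf.1 r c hr.1 hr.2 hc.1 hc.2

theorem IsLatinSquare.apply_le (hf : IsLatinSquare n f) {r c : ℕ} (hr : r ∈ Icc 1 n)
    (hc : c ∈ Icc 1 n) : f (r, c) ≤ n :=
  (mem_Icc.1 (hf.apply_mem_Icc hr hc)).2

theorem IsLatinSquare.injOn_row (hf : IsLatinSquare n f) {r : ℕ} (hr : r ∈ Icc 1 n) :
    Set.InjOn (fun c => f (r, c)) (Icc 1 n) := by
  intro c₁ hc₁ c₂ hc₂ h
  rw [coe_Icc, Set.mem_Icc] at hc₁ hc₂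
  rw [mem_Icc] at hr
  by_contra hne
  exact hf.2.1 r c₁ c₂ hr.1 hr.2 hc₁.1 hc₁.2 hc₂.1 hc₂.2 hne h

theorem IsLatinSquare.swap (hf : IsLatinSquare n f) : IsLatinSquare n (fun p => f p.swap) :=
  ⟨fun r c hr₁ hr₂ hc₁ hc₂ => hf.1 c r hc₁ hc₂ hr₁ hr₂,
    fun r c₁ c₂ hr₁ hr₂ h₁ h₁' h₂ h₂' hne => hf.2.2 c₁ c₂ r h₁ h₁' h₂ h₂' hr₁ hr₂ hne,
    fun r₁ r₂ c h₁ h₁' h₂ h₂' hc₁ hc₂ hne => hf.2.1 c r₁ r₂ hc₁ hc₂ h₁ h₁' h₂ h₂' hne⟩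

end LatinSquare

section Cells

variable {n : ℕ} {P : ℕ × ℕ → Prop} [DecidablePred P] {f : ℕ × ℕ → ℕ}

def gridCells (n : ℕ) (P : ℕ × ℕ → Prop) [DecidablePred P] : Finset (ℕ × ℕ) :=
  {q ∈ Icc 1 n ×ˢ Icc 1 n | P q}

def rowCells (n : ℕ) (P : ℕ × ℕ → Prop) [DecidablePred P] (r : ℕ) : Finset ℕ :=
  {c ∈ Icc 1 n | P (r, c)}

def colCells (n : ℕ) (P : ℕ × ℕ → Prop) [DecidablePred P] (c : ℕ) : Finset ℕ :=
  {r ∈ Icc 1 n | P (r, c)}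

theorem card_filter_gridCells (Q : ℕ × ℕ → Prop) [DecidablePred Q] :
    #{q ∈ gridCells n P | Q q} = ∑ r ∈ Icc 1 n, #{c ∈ rowCells n P r | Q (r, c)} := by
  simp only [gridCells, rowCells, filter_filter, card_filter_product_eq_sum]

/-- `sum_comp_card_rowCells` says that the row counts of `P` are a permutation of `1, …, n`.
The circled set is arbitrary so that columns can be treated as rows of the transposed puzzle. -/
structure IsRowwisePulsarSolution (n : ℕ) (P : ℕ × ℕ → Prop) [DecidablePred P]
    (f : ℕ × ℕ → ℕ) : Prop where
  latin : IsLatinSquare n f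
  mem_grid : ∀ p, P p → p ∈ Icc 1 n ×ˢ Icc 1 n
  self_count : ∀ p, P p → f p = {q | P q ∧ f q = f p}.ncard
  sum_comp_card_rowCells : ∀ g : ℕ → ℕ, ∑ r ∈ Icc 1 n, g #(rowCells n P r) = ∑ k ∈ Icc 1 n, g k

namespace IsRowwisePulsarSolution

variable (h : IsRowwisePulsarSolution n P f)
include h

theorem card_gridCells_filter_apply_eq : ∀ v ∈ Icc 1 n, #{q ∈ gridCells n P | f q = v} = v := by
  refine card_fiber_eq_of_self_counting (fun q hq => ?_) (fun q hq => ?_) ?_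
  · obtain ⟨hr, hc⟩ := mem_product.1 (mem_filter.1 hq).1
    exact h.latin.apply_mem_Icc hr hc
  · conv_rhs => rw [h.self_count q (mem_filter.1 hq).2]
    rw [← Set.ncard_coe_finset]
    congr 1
    ext p
    simp only [gridCells, coe_filter, mem_filter, Set.mem_ofPred_eq]
    exact ⟨fun hp => ⟨hp.1.2, hp.2⟩, fun hp => ⟨⟨h.mem_grid p hp.1, hp.1⟩, hp.2⟩⟩
  · have hcard := card_filter_gridCells (n := n) (P := P) fun _ => True
    simp only [filter_true] at hcard
    exact hcard.trans (h.sum_comp_card_rowCells id)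

theorem card_rowCells_filter_le_apply_eq_min {m : ℕ} (hm : m ≤ n) {r : ℕ} (hr : r ∈ Icc 1 n) :
    #{c ∈ rowCells n P r | n + 1 - m ≤ f (r, c)} = min #(rowCells n P r) m := by
  have hle : ∀ r ∈ Icc 1 n,
      #{c ∈ rowCells n P r | n + 1 - m ≤ f (r, c)} ≤ min #(rowCells n P r) m := by
    intro r hr
    have hbound := card_filter_le_sub_of_injOn (s := rowCells n P r)
      (fun c hc => h.latin.apply_le hr (mem_filter.1 hc).1)
      ((h.latin.injOn_row hr).mono (coe_subset.2 (filter_subset _ _))) (n + 1 - m)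
    exact le_min (card_filter_le _ _) (by omega)
  refine (sum_eq_sum_iff_of_le hle).1 ?_ r hr
  calc ∑ r ∈ Icc 1 n, #{c ∈ rowCells n P r | n + 1 - m ≤ f (r, c)}
      = #{q ∈ gridCells n P | n + 1 - m ≤ f q} :=
        (card_filter_gridCells fun q => n + 1 - m ≤ f q).symm
    _ = ∑ v ∈ Icc (n + 1 - m) n, #{q ∈ gridCells n P | f q = v} := by
      rw [card_eq_sum_card_fiberwise (f := f) (t := Icc (n + 1 - m) n)]
      · refine sum_congr rfl fun v hv => ?_
        rw [filter_filter]
        exact congrArg card (filter_congr fun q _ => by rw [mem_Icc] at hv; omega)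
      · intro q hq
        obtain ⟨hq, hm⟩ := mem_filter.1 hq
        obtain ⟨hr, hc⟩ := mem_product.1 (mem_filter.1 hq).1
        exact mem_Icc.2 ⟨hm, h.latin.apply_le hr hc⟩
    _ = ∑ v ∈ Icc (n + 1 - m) n, v :=
      sum_congr rfl fun v hv =>
        h.card_gridCells_filter_apply_eq v (by rw [mem_Icc] at hv ⊢; omega)
    _ = ∑ r ∈ Icc 1 n, min #(rowCells n P r) m := by
      rw [← Nat.sum_Icc_min_eq_sum_Icc n m hm, h.sum_comp_card_rowCells (min · m)]

theorem apply_lt_apply {r c c' : ℕ} (hc : P (r, c)) (hc' : c' ∈ Icc 1 n)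
    (hnc' : ¬ P (r, c')) : f (r, c') < f (r, c) := by
  obtain ⟨hr, hcI⟩ := mem_product.1 (h.mem_grid _ hc)
  have hcrow : c ∈ rowCells n P r := mem_filter.2 ⟨hcI, hc⟩
  set k := #(rowCells n P r)
  have hk : k ≤ n := (card_filter_le _ _).trans (by simp)
  have htop := h.card_rowCells_filter_le_apply_eq_min hk hr
  rw [min_self] at htop
  have hmaps : Set.MapsTo (fun c => f (r, c)) (rowCells n P r) (Icc (n + 1 - k) n) :=
    fun c₀ hc₀ => mem_Icc.2 ⟨filter_card_eq htop c₀ hc₀, h.latin.apply_le hr (mem_filter.1 hc₀).1⟩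
  have hinj : Set.InjOn (fun c => f (r, c)) (rowCells n P r) :=
    (h.latin.injOn_row hr).mono (coe_subset.2 (filter_subset _ _))
  by_contra! hle
  have hc'mem : f (r, c') ∈ Icc (n + 1 - k) n :=
    mem_Icc.2 ⟨(mem_Icc.1 (hmaps hcrow)).1.trans hle, h.latin.apply_le hr hc'⟩
  obtain ⟨c₀, hc₀, hval⟩ :=
    surjOn_of_injOn_of_card_le _ hmaps hinj (by rw [Nat.card_Icc]; omega) hc'mem
  have hc₀c' : c₀ = c' := h.latin.injOn_row hr (mem_filter.1 hc₀).1 hc' hval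
  exact hnc' (hc₀c' ▸ (mem_filter.1 hc₀).2)

end IsRowwisePulsarSolution

end Cells

section CircledSet

instance Circled.decidablePred : ∀ n, DecidablePred (Circled n)
  | 0 => fun _ => isFalse id
  | 1 => fun p => inferInstanceAs (Decidable (p = (1, 1)))
  | n + 2 => fun (r, c) =>
    haveI := Circled.decidablePred (n + 1)
    inferInstanceAs (Decidable (1 ≤ r ∧ r ≤ n + 2 ∧ 1 ≤ c ∧ c ≤ n + 2 ∧
      (r = 1 ∨ (2 ≤ r ∧ 2 ≤ c ∧ Circled (n + 1) (n + 2 - c + 1, r - 1)))))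

theorem Circled.mem_grid : ∀ {n : ℕ} {p : ℕ × ℕ}, Circled n p → p ∈ Icc 1 n ×ˢ Icc 1 n
  | 1, _, rfl => by simp
  | _ + 2, (_, _), h => by
    simp only [mem_product, mem_Icc]
    exact ⟨⟨h.1, h.2.1⟩, h.2.2.1, h.2.2.2.1⟩

theorem circled_one_left : ∀ {n c : ℕ}, c ∈ Icc 1 n → Circled n (1, c)
  | 1, c, hc => by rw [Icc_self, mem_singleton] at hc; rw [hc]; rfl
  | _ + 2, _, hc => by
    rw [mem_Icc] at hc
    exact ⟨le_rfl, by omega, hc.1, hc.2, Or.inl rfl⟩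

theorem not_circled_add_two_right_one {n r : ℕ} (hr : 1 ≤ r) : ¬ Circled (n + 2) (r + 1, 1) := by
  rintro ⟨-, -, -, -, h | ⟨-, h, -⟩⟩ <;> omega

theorem circled_add_two_iff {n r c : ℕ} (hr : 1 ≤ r) :
    Circled (n + 2) (r + 1, c + 1) ↔ Circled (n + 1) (n + 2 - c, r) := by
  constructor
  · rintro ⟨-, -, -, hc, h | ⟨-, -, h⟩⟩
    · omega
    · convert h using 2 <;> omega
  · intro h
    have hb := mem_product.1 h.mem_grid
    simp only [mem_Icc] at hb
    refine ⟨by omega, by omega, by omega, by omega, Or.inr ⟨by omega, by omega, ?_⟩⟩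
    convert h using 2 <;> omega

theorem card_rowCells_circled_one (n : ℕ) : #(rowCells n (Circled n) 1) = n := by
  rw [rowCells, filter_true_of_mem fun c hc => circled_one_left hc, Nat.card_Icc,
    Nat.add_sub_cancel]

theorem card_colCells_circled_one (n : ℕ) : #(colCells (n + 2) (Circled (n + 2)) 1) = 1 := by
  rw [colCells, card_filter_Icc_one_add_one, if_pos (circled_one_left (by simp)),
    filter_false_of_mem fun r hr => not_circled_add_two_right_one (mem_Icc.1 hr).1, card_empty]

theorem card_rowCells_circled_add_one {n r : ℕ} (hr : 1 ≤ r) :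
    #(rowCells (n + 2) (Circled (n + 2)) (r + 1)) = #(colCells (n + 1) (Circled (n + 1)) r) := by
  rw [rowCells, card_filter_Icc_one_add_one, if_neg (not_circled_add_two_right_one hr), zero_add]
  simp only [circled_add_two_iff hr]
  exact card_filter_Icc_one_reflect (n + 1) fun a => Circled (n + 1) (a, r)

theorem card_colCells_circled_add_one {n c : ℕ} (hc : c ∈ Icc 1 (n + 1)) :
    #(colCells (n + 2) (Circled (n + 2)) (c + 1)) =
      #(rowCells (n + 1) (Circled (n + 1)) (n + 2 - c)) + 1 := by
  rw [colCells, card_filter_Icc_one_add_one, if_pos (circled_one_left (by simp at hc ⊢; omega)),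
    rowCells, filter_congr fun r hr => circled_add_two_iff (mem_Icc.1 hr).1, add_comm]

theorem sum_comp_card_circled_cells {M : Type*} [AddCommMonoid M] : ∀ n : ℕ,
    (∀ g : ℕ → M, ∑ r ∈ Icc 1 n, g #(rowCells n (Circled n) r) = ∑ k ∈ Icc 1 n, g k) ∧
      ∀ g : ℕ → M, ∑ c ∈ Icc 1 n, g #(colCells n (Circled n) c) = ∑ k ∈ Icc 1 n, g k
  | 0 => by simp
  | 1 => by
    have hcol : #(colCells 1 (Circled 1) 1) = 1 := by decide
    simp [card_rowCells_circled_one, hcol]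
  | n + 2 => by
    obtain ⟨hrow, hcol⟩ := sum_comp_card_circled_cells (M := M) (n + 1)
    refine ⟨fun g => ?_, fun g => ?_⟩
    · have hstep : ∀ r ∈ Icc 1 (n + 1), g #(rowCells (n + 2) (Circled (n + 2)) (r + 1)) =
          g #(colCells (n + 1) (Circled (n + 1)) r) := fun r hr => by
        rw [card_rowCells_circled_add_one (mem_Icc.1 hr).1]
      rw [sum_Icc_one_add_one, card_rowCells_circled_one, sum_congr rfl hstep, hcol g,
        sum_Icc_succ_top (by omega : 1 ≤ n + 2), add_comm]
    · have hstep : ∀ c ∈ Icc 1 (n + 1), g #(colCells (n + 2) (Circled (n + 2)) (c + 1)) =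
          g (#(rowCells (n + 1) (Circled (n + 1)) (n + 1 + 1 - c)) + 1) := fun c hc => by
        rw [card_colCells_circled_add_one hc]
      rw [sum_Icc_one_add_one, sum_Icc_one_add_one (n + 1) g, card_colCells_circled_one,
        sum_congr rfl hstep,
        sum_Icc_one_reflect (n + 1) fun c => g (#(rowCells (n + 1) (Circled (n + 1)) c) + 1),
        hrow fun k => g (k + 1)]

end CircledSet

theorem pulsar_circled_gt_uncircled_general (n : ℕ) (f : ℕ × ℕ → ℕ)
    (hf : IsPulsarSolution n f) :
    (∀ r c c', 1 ≤ r → r ≤ n → 1 ≤ c → c ≤ n → 1 ≤ c' → c' ≤ n →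
      Circled n (r, c) → ¬ Circled n (r, c') → f (r, c') < f (r, c)) ∧
    (∀ r r' c, 1 ≤ r → r ≤ n → 1 ≤ r' → r' ≤ n → 1 ≤ c → c ≤ n →
      Circled n (r, c) → ¬ Circled n (r', c) → f (r', c) < f (r, c)) := by
  obtain ⟨hlatin, hself⟩ := hf
  obtain ⟨hrows, hcols⟩ := sum_comp_card_circled_cells (M := ℕ) n
  have hrowwise : IsRowwisePulsarSolution n (Circled n) f :=
    ⟨hlatin, fun _ => Circled.mem_grid, hself, hrows⟩
  have hcolwise : IsRowwisePulsarSolution n (fun p => Circled n p.swap) (fun p => f p.swap) :=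
    ⟨hlatin.swap,
      fun p hp => by
        simpa only [mem_product, Prod.fst_swap, Prod.snd_swap, and_comm] using hp.mem_grid,
      fun p hp => (hself _ hp).trans (Set.ncard_preimage_swap _).symm, hcols⟩
  refine ⟨fun r c c' _ _ _ _ hc'₁ hc'₂ hc hnc' => ?_,
    fun r r' c _ _ hr'₁ hr'₂ _ _ hc hnr' => ?_⟩
  · exact hrowwise.apply_lt_apply hc (mem_Icc.2 ⟨hc'₁, hc'₂⟩) hnc'
  · exact hcolwise.apply_lt_apply (r := c) hc (mem_Icc.2 ⟨hr'₁, hr'₂⟩) hnr'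

/-- In any solution of the `n × n` Pulsar puzzle, within any row or column every circled
entry is strictly greater than every uncircled entry. -/
theorem pulsar_circled_gt_uncircled (n : ℕ) (hn : 1 ≤ n) (f : ℕ × ℕ → ℕ)
    (hf : IsPulsarSolution n f) :
    (∀ r c c', 1 ≤ r → r ≤ n → 1 ≤ c → c ≤ n → 1 ≤ c' → c' ≤ n →
      Circled n (r, c) → ¬ Circled n (r, c') → f (r, c') < f (r, c)) ∧
    (∀ r r' c, 1 ≤ r → r ≤ n → 1 ≤ r' → r' ≤ n → 1 ≤ c → c ≤ n →
      Circled n (r, c) → ¬ Circled n (r', c) → f (r', c) < f (r, c)) :=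
  pulsar_circled_gt_uncircled_general n f hf
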